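/- In the finite-sum setting, suppose the mini-batch gradients are g_k = Σ_{i=1}^n ν_{k,i} ∇f_i(y_k), where each sampling vector ν_k ∈ ℝ^n has nonnegative entries summing to 1 and marginal expectations E[ν_{k,i}] = 1/n. If α and β are chosen so that R(α, β) < 1, then the ASG method satisfies, for all k ≥ 0: E‖y_{k+1} − x*‖ ≤ R(α, β)^k ‖x_0 − x*‖ + (α √((1+β)² + 1) / (1 − R(α, β))) σ, where σ = (1/n) Σ_{i=1}^n ‖∇f_i(x*)‖. -/

import Mathlib

/-!
Along the segment from `x⋆` to `y`, the averaged Hessian of `f_i` is symmetric with spectrum in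
`[μ, L]` and maps `y - x⋆` to `∇f_i(y) - ∇f_i(x⋆)`. Averaging over the sample, the stochastic
gradient is `H (y - x⋆) + e` for such an `H`, with noise `e = Σ ν_i ∇f_i(x⋆)`. One ASG step
therefore acts on the error state `(y_{k+1} - x⋆, x_{k-1} - x_k)` by a block operator in `H`
plus a noise term of size `α √((1+β)² + 1) ‖e‖`. Diagonalising `H`, the block operator splits into
`2 × 2` matrices, one per eigenvalue `λ ∈ [μ, L]`, of norm `R_λ(α, β) ≤ R(α, β)`. Since
`E ν_i = 1/n`, `E ‖e‖ ≤ σ`, and the recursion `a_{k+1} ≤ R a_k + α √((1+β)² + 1) σ` for the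
expected error sums to the bound.
-/

open MeasureTheory

/-- `C_λ(α, β)`. -/
noncomputable def Clam (α β lam : ℝ) : ℝ :=
  (1 - α * (1 + β) * lam) ^ 2 + α ^ 2 * lam ^ 2 + β ^ 2 * (β ^ 2 + 1)

/-- `R_λ(α, β) = (1/√2)(C_λ + √(C_λ² − 4β²(1−αλ)²))^{1/2}`. -/
noncomputable def Rlam (α β lam : ℝ) : ℝ :=
  (1 / Real.sqrt 2) *
    Real.sqrt (Clam α β lam +
      Real.sqrt ((Clam α β lam) ^ 2 - 4 * β ^ 2 * (1 - α * lam) ^ 2))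

/-- `R(α, β) = max_{λ ∈ [μ, L]} R_λ(α, β)`. -/
noncomputable def Rmax (μ L α β : ℝ) : ℝ :=
  sSup ((fun lam => Rlam α β lam) '' Set.Icc μ L)

open scoped RealInnerProductSpace

lemma two_mul_mul_mul_le_of_mul_eq_sq {A B q : ℝ} (hA : 0 ≤ A) (hB : 0 ≤ B) (hAB : A * B = q ^ 2)
    (x y : ℝ) : 2 * q * x * y ≤ A * x ^ 2 + B * y ^ 2 := by
  have hsq : (2 * q * x * y) ^ 2 ≤ (A * x ^ 2 + B * y ^ 2) ^ 2 := by
    nlinarith [sq_nonneg (A * x ^ 2 - B * y ^ 2), congrArg (· * (x * y) ^ 2) hAB]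
  exact (abs_le_of_sq_le_sq' hsq (by positivity)).2

/-- The squared operator norm of `[[a, b], [c, d]]` is the top eigenvalue of its Gram matrix. -/
lemma two_by_two_sq_norm_le (a b c d x y : ℝ) :
    (a * x + b * y) ^ 2 + (c * x + d * y) ^ 2 ≤
      ((a ^ 2 + b ^ 2 + c ^ 2 + d ^ 2) +
        √((a ^ 2 + b ^ 2 + c ^ 2 + d ^ 2) ^ 2 - 4 * (a * d - b * c) ^ 2)) / 2 *
          (x ^ 2 + y ^ 2) := by
  set p := a ^ 2 + c ^ 2
  set r := b ^ 2 + d ^ 2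
  set q := a * b + c * d
  rw [show a ^ 2 + b ^ 2 + c ^ 2 + d ^ 2 = p + r by ring,
    show (p + r) ^ 2 - 4 * (a * d - b * c) ^ 2 = (p - r) ^ 2 + 4 * q ^ 2 by ring]
  set s := √((p - r) ^ 2 + 4 * q ^ 2)
  have hs : s ^ 2 = (p - r) ^ 2 + 4 * q ^ 2 := Real.sq_sqrt (by positivity)
  have hps : |p - r| ≤ s := Real.abs_le_sqrt (by nlinarith)
  have := two_mul_mul_mul_le_of_mul_eq_sq (q := q)
    (A := (p + r + s) / 2 - p) (B := (p + r + s) / 2 - r)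
    (by linarith [(abs_le.mp hps).2]) (by linarith [(abs_le.mp hps).1]) (by nlinarith) x y
  nlinarith

lemma Rlam_nonneg (α β lam : ℝ) : 0 ≤ Rlam α β lam := by
  unfold Rlam; positivity

lemma Rlam_sq (α β lam : ℝ) : Rlam α β lam ^ 2 =
    (Clam α β lam + √(Clam α β lam ^ 2 - 4 * β ^ 2 * (1 - α * lam) ^ 2)) / 2 := by
  have hC : 0 ≤ Clam α β lam := by unfold Clam; positivity
  rw [Rlam, mul_pow, Real.sq_sqrt (by positivity), div_pow, Real.sq_sqrt zero_le_two]
  ring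

lemma continuous_Rlam (α β : ℝ) : Continuous (Rlam α β) := by
  unfold Rlam Clam; fun_prop

lemma Rlam_le_Rmax {μ L α β lam : ℝ} (h : lam ∈ Set.Icc μ L) : Rlam α β lam ≤ Rmax μ L α β :=
  le_csSup (isCompact_Icc.image (continuous_Rlam α β)).bddAbove (Set.mem_image_of_mem _ h)

lemma Rmax_nonneg {μ L : ℝ} (hμL : μ ≤ L) (α β : ℝ) : 0 ≤ Rmax μ L α β :=
  (Rlam_nonneg α β μ).trans (Rlam_le_Rmax ⟨le_rfl, hμL⟩)

lemma asg_eigen_sq_le (α β lam u w : ℝ) :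
    ((1 - α * (1 + β) * lam) * u - β ^ 2 * w) ^ 2 + (α * lam * u + β * w) ^ 2 ≤
      Rlam α β lam ^ 2 * (u ^ 2 + w ^ 2) := by
  have h := two_by_two_sq_norm_le (1 - α * (1 + β) * lam) (-β ^ 2) (α * lam) β u w
  have hC : (1 - α * (1 + β) * lam) ^ 2 + (-β ^ 2) ^ 2 + (α * lam) ^ 2 + β ^ 2 = Clam α β lam := by
    unfold Clam; ring
  have hdet : 4 * ((1 - α * (1 + β) * lam) * β - -β ^ 2 * (α * lam)) ^ 2 =
      4 * β ^ 2 * (1 - α * lam) ^ 2 := by ring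
  rw [hC, hdet, ← Rlam_sq] at h
  convert h using 2; ring

section Symmetric

variable {E : Type*} [NormedAddCommGroup E] [InnerProductSpace ℝ E]

structure SymmetricBetween (μ L : ℝ) (H : E →L[ℝ] E) : Prop where
  isSymmetric : (H : E →ₗ[ℝ] E).IsSymmetric
  lower : ∀ v, μ * ‖v‖ ^ 2 ≤ ⟪H v, v⟫
  upper : ∀ v, ⟪H v, v⟫ ≤ L * ‖v‖ ^ 2

variable {μ L : ℝ}

lemma SymmetricBetween.inner_apply_comm {H : E →L[ℝ] E} (hH : SymmetricBetween μ L H) (v w : E) :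
    ⟪H v, w⟫ = ⟪v, H w⟫ :=
  hH.isSymmetric v w

lemma SymmetricBetween.sum_smul {ι : Type*} [Fintype ι] {H : ι → E →L[ℝ] E} {c : ι → ℝ}
    (hH : ∀ i, SymmetricBetween μ L (H i)) (hc0 : ∀ i, 0 ≤ c i) (hc1 : ∑ i, c i = 1) :
    SymmetricBetween μ L (∑ i, c i • H i) := by
  have happly : ∀ v w, ⟪(∑ i, c i • H i) v, w⟫ = ∑ i, c i * ⟪H i v, w⟫ := fun v w => by
    simp only [_root_.sum_apply, _root_.smul_apply, sum_inner, real_inner_smul_left]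
  refine ⟨fun v w => ?_, fun v => ?_, fun v => ?_⟩
  · change ⟪(∑ i, c i • H i) v, w⟫ = ⟪v, (∑ i, c i • H i) w⟫
    rw [happly, real_inner_comm, happly]
    exact Finset.sum_congr rfl fun i _ => by rw [(hH i).inner_apply_comm, real_inner_comm]
  · calc μ * ‖v‖ ^ 2 = ∑ i, c i * (μ * ‖v‖ ^ 2) := by rw [← Finset.sum_mul, hc1, one_mul]
      _ ≤ _ := Finset.sum_le_sum fun i _ => mul_le_mul_of_nonneg_left ((hH i).lower v) (hc0 i)
      _ = _ := (happly v v).symm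
  · calc _ = ∑ i, c i * ⟪H i v, v⟫ := happly v v
      _ ≤ ∑ i, c i * (L * ‖v‖ ^ 2) :=
        Finset.sum_le_sum fun i _ => mul_le_mul_of_nonneg_left ((hH i).upper v) (hc0 i)
      _ = L * ‖v‖ ^ 2 := by rw [← Finset.sum_mul, hc1, one_mul]

lemma SymmetricBetween.asg_sq_norm_le [FiniteDimensional ℝ E] {H : E →L[ℝ] E}
    (hH : SymmetricBetween μ L H) (α β : ℝ) (u w : E) :
    ‖u - (α * (1 + β)) • H u - β ^ 2 • w‖ ^ 2 + ‖α • H u + β • w‖ ^ 2 ≤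
      Rmax μ L α β ^ 2 * (‖u‖ ^ 2 + ‖w‖ ^ 2) := by
  set b := hH.isSymmetric.eigenvectorBasis rfl
  set lam := hH.isSymmetric.eigenvalues rfl
  have hHb : ∀ j, H (b j) = lam j • b j := hH.isSymmetric.apply_eigenvectorBasis rfl
  have hbH : ∀ j v, ⟪b j, H v⟫ = lam j * ⟪b j, v⟫ := fun j v => by
    rw [← hH.inner_apply_comm, hHb, real_inner_smul_left]
  have hlam : ∀ j, lam j ∈ Set.Icc μ L := fun j => by
    have hRay : ⟪H (b j), b j⟫ = lam j := by
      rw [hHb, real_inner_smul_left, real_inner_self_eq_norm_sq, b.orthonormal.1 j]; ring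
    exact ⟨by simpa [hRay, b.orthonormal.1 j] using hH.lower (b j),
      by simpa [hRay, b.orthonormal.1 j] using hH.upper (b j)⟩
  calc _ = ∑ j, (((1 - α * (1 + β) * lam j) * ⟪b j, u⟫ - β ^ 2 * ⟪b j, w⟫) ^ 2 +
        (α * lam j * ⟪b j, u⟫ + β * ⟪b j, w⟫) ^ 2) := by
        simp only [← b.sum_sq_inner_right, ← Finset.sum_add_distrib, inner_sub_right,
          inner_add_right, real_inner_smul_right, hbH]
        congr! 3 <;> ring
    _ ≤ ∑ j, Rmax μ L α β ^ 2 * (⟪b j, u⟫ ^ 2 + ⟪b j, w⟫ ^ 2) := by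
        gcongr with j
        refine (asg_eigen_sq_le α β (lam j) _ _).trans ?_
        gcongr
        exacts [Rlam_nonneg .., Rlam_le_Rmax (hlam j)]
    _ = _ := by rw [← Finset.mul_sum, Finset.sum_add_distrib, b.sum_sq_inner_right,
        b.sum_sq_inner_right]

end Symmetric

section Hessian

variable {E : Type*} [NormedAddCommGroup E] [InnerProductSpace ℝ E] {μ L : ℝ}

lemma StrongConvexOn.mul_norm_sub_sq_le_inner_gradient_sub [CompleteSpace E] {f : E → ℝ}
    (hf : Differentiable ℝ f) (hsc : StrongConvexOn Set.univ μ f) (a c : E) :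
    μ * ‖a - c‖ ^ 2 ≤ ⟪gradient f a - gradient f c, a - c⟫ := by
  set φ := fun s : ℝ => f (AffineMap.lineMap c a s) - μ / 2 * ‖AffineMap.lineMap c a s‖ ^ 2
  have hconv : ConvexOn ℝ Set.univ φ :=
    (strongConvexOn_iff_convex.mp hsc).comp_affineMap (AffineMap.lineMap c a)
  have hφ : ∀ s, HasDerivAt φ (⟪gradient f (AffineMap.lineMap c a s), a - c⟫ -
      μ * ⟪AffineMap.lineMap c a s, a - c⟫) s := fun s => by
    have hline : HasDerivAt (AffineMap.lineMap c a) (a - c) s := AffineMap.hasDerivAt_lineMap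
    refine (((hf _).hasFDerivAt.comp_hasDerivAt s hline).sub
      (hline.norm_sq.const_mul (μ / 2))).congr_deriv ?_
    rw [inner_gradient_left]; ring
  -- the derivative of a convex function of one variable increases from `0` to `1`
  have h0 := hconv.le_slope_of_hasDerivAt (Set.mem_univ 0) (Set.mem_univ 1) one_pos (hφ 0)
  have h1 := hconv.slope_le_of_hasDerivAt (Set.mem_univ 0) (Set.mem_univ 1) one_pos (hφ 1)
  simp only [AffineMap.lineMap_apply_zero, AffineMap.lineMap_apply_one] at h0 h1
  have hnorm : ‖a - c‖ ^ 2 = ⟪a, a - c⟫ - ⟪c, a - c⟫ := by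
    rw [← real_inner_self_eq_norm_sq, inner_sub_left]
  rw [inner_sub_left, hnorm]
  linarith

lemma inner_apply_self_le_of_hasFDerivAt {g : E → E} {D : E →L[ℝ] E} {z v : E} {K : ℝ}
    (hg : HasFDerivAt g D z) (h : ∀ s > 0, ⟪g (z + s • v) - g z, v⟫ ≤ s * K) :
    ⟪D v, v⟫ ≤ K := by
  have hline : HasDerivAt (fun s : ℝ => z + s • v) v 0 := by
    simpa using ((hasDerivAt_id (0 : ℝ)).smul_const v).const_add z
  have hφ : HasDerivAt (fun s : ℝ => ⟪g (z + s • v), v⟫) ⟪D v, v⟫ 0 := by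
    simpa using (hg.comp_hasDerivAt_of_eq 0 hline (by simp)).inner ℝ (hasDerivAt_const 0 v)
  refine le_of_tendsto hφ.tendsto_slope_zero_right ?_
  filter_upwards [self_mem_nhdsWithin] with s (hs : 0 < s)
  rw [smul_eq_mul, inv_mul_le_iff₀ hs]
  simpa [inner_sub_left] using h s hs

variable [CompleteSpace E] {f : E → ℝ}

lemma ContDiff.contDiff_one_gradient (hf : ContDiff ℝ 2 f) : ContDiff ℝ 1 (gradient f) :=
  (InnerProductSpace.toDual ℝ E).symm.contDiff.comp (hf.fderiv_right (by norm_num))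

lemma inner_fderiv_gradient_apply (z v w : E) :
    ⟪fderiv ℝ (gradient f) z v, w⟫ = fderiv ℝ (fderiv ℝ f) z v w := by
  change ⟪fderiv ℝ ((InnerProductSpace.toDual ℝ E).symm ∘ fderiv ℝ f) z v, w⟫ = _
  rw [LinearIsometryEquiv.comp_fderiv]
  exact InnerProductSpace.toDual_symm_apply

lemma symmetricBetween_fderiv_gradient (hf : ContDiff ℝ 2 f) (hsc : StrongConvexOn Set.univ μ f)
    (hL : ∀ u v, ‖gradient f u - gradient f v‖ ≤ L * ‖u - v‖) (z : E) :
    SymmetricBetween μ L (fderiv ℝ (gradient f) z) := by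
  have hD : HasFDerivAt (gradient f) (fderiv ℝ (gradient f) z) z :=
    (hf.contDiff_one_gradient.differentiable one_ne_zero z).hasFDerivAt
  refine ⟨fun v w => ?_, fun v => ?_, fun v => ?_⟩
  · change ⟪fderiv ℝ (gradient f) z v, w⟫ = ⟪v, fderiv ℝ (gradient f) z w⟫
    rw [← real_inner_comm v, inner_fderiv_gradient_apply, inner_fderiv_gradient_apply]
    exact hf.contDiffAt.isSymmSndFDerivAt (by simp) v w
  · have hneg := inner_apply_self_le_of_hasFDerivAt hD.neg (K := -(μ * ‖v‖ ^ 2)) fun s hs => by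
      have hmono := hsc.mul_norm_sub_sq_le_inner_gradient_sub
        (hf.differentiable two_ne_zero) (z + s • v) z
      rw [add_sub_cancel_left, norm_smul, real_inner_smul_right, Real.norm_of_nonneg hs.le] at hmono
      rw [Pi.neg_apply, Pi.neg_apply, neg_sub_neg, ← neg_sub, inner_neg_left]
      nlinarith
    simpa [inner_neg_left] using hneg
  · refine inner_apply_self_le_of_hasFDerivAt hD fun s hs => ?_
    have hlip := hL (z + s • v) z
    rw [add_sub_cancel_left, norm_smul, Real.norm_of_nonneg hs.le] at hlip
    calc _ ≤ ‖gradient f (z + s • v) - gradient f z‖ * ‖v‖ := real_inner_le_norm _ _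
      _ ≤ L * (s * ‖v‖) * ‖v‖ := by gcongr
      _ = s * (L * ‖v‖ ^ 2) := by ring

end Hessian

section AveragedHessian

variable {E : Type*} [NormedAddCommGroup E] [InnerProductSpace ℝ E] [CompleteSpace E] {μ L : ℝ}

lemma inner_intervalIntegral_apply {S : ℝ → E →L[ℝ] E} (hS : Continuous S) (a b : ℝ) (v w : E) :
    ⟪(∫ t in a..b, S t) v, w⟫ = ∫ t in a..b, ⟪S t v, w⟫ := by
  rw [ContinuousLinearMap.intervalIntegral_apply (hS.intervalIntegrable a b), real_inner_comm,
    ← innerSL_apply_apply ℝ, ← (innerSL ℝ w).intervalIntegral_comp_comm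
      ((hS.clm_apply continuous_const).intervalIntegrable a b)]
  simp only [innerSL_apply_apply, real_inner_comm w]

lemma SymmetricBetween.intervalIntegral {S : ℝ → E →L[ℝ] E} (hS : Continuous S)
    (h : ∀ t, SymmetricBetween μ L (S t)) : SymmetricBetween μ L (∫ t in (0 : ℝ)..1, S t) := by
  have hint : ∀ v w, IntervalIntegrable (fun t => ⟪S t v, w⟫) volume 0 1 :=
    fun v w => ((hS.clm_apply continuous_const).inner continuous_const).intervalIntegrable 0 1
  refine ⟨fun v w => ?_, fun v => ?_, fun v => ?_⟩
  · change ⟪(∫ t in (0 : ℝ)..1, S t) v, w⟫ = ⟪v, (∫ t in (0 : ℝ)..1, S t) w⟫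
    rw [inner_intervalIntegral_apply hS, real_inner_comm, inner_intervalIntegral_apply hS]
    simp only [(h _).inner_apply_comm v, real_inner_comm v]
  · rw [inner_intervalIntegral_apply hS]
    simpa using intervalIntegral.integral_mono zero_le_one intervalIntegrable_const (hint v v)
      fun t => (h t).lower v
  · rw [inner_intervalIntegral_apply hS]
    simpa using intervalIntegral.integral_mono zero_le_one (hint v v) intervalIntegrable_const
      fun t => (h t).upper v

/-- The averaged Hessian `∫₀¹ ∇²f(p + t (q - p)) dt` maps `q - p` to `∇f q - ∇f p`. -/
lemma exists_symmetricBetween_apply_sub {f : E → ℝ} (hf : ContDiff ℝ 2 f)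
    (hsc : StrongConvexOn Set.univ μ f)
    (hL : ∀ u v, ‖gradient f u - gradient f v‖ ≤ L * ‖u - v‖) (p q : E) :
    ∃ H : E →L[ℝ] E, SymmetricBetween μ L H ∧ H (q - p) = gradient f q - gradient f p := by
  have hS : Continuous fun t : ℝ => fderiv ℝ (gradient f) (p + t • (q - p)) :=
    (hf.contDiff_one_gradient.continuous_fderiv one_ne_zero).comp (by fun_prop)
  refine ⟨_, .intervalIntegral hS fun t => symmetricBetween_fderiv_gradient hf hsc hL _, ?_⟩
  rw [ContinuousLinearMap.intervalIntegral_apply (hS.intervalIntegrable 0 1),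
    intervalIntegral.integral_eq_sub_of_hasDerivAt (f := fun t : ℝ => gradient f (p + t • (q - p)))
      (fun t _ => ?_) ((hS.clm_apply continuous_const).intervalIntegrable 0 1)]
  · simp
  · refine (hf.contDiff_one_gradient.differentiable one_ne_zero _).hasFDerivAt.comp_hasDerivAt t ?_
    simpa using ((hasDerivAt_id t).smul_const (q - p)).const_add p

lemma exists_symmetricBetween_sum_smul_apply_sub {ι : Type*} [Fintype ι] {f : ι → E → ℝ}
    (hf : ∀ i, ContDiff ℝ 2 (f i)) (hsc : ∀ i, StrongConvexOn Set.univ μ (f i))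
    (hL : ∀ i u v, ‖gradient (f i) u - gradient (f i) v‖ ≤ L * ‖u - v‖)
    {c : ι → ℝ} (hc0 : ∀ i, 0 ≤ c i) (hc1 : ∑ i, c i = 1) (p q : E) :
    ∃ H : E →L[ℝ] E, SymmetricBetween μ L H ∧
      H (q - p) = ∑ i, c i • (gradient (f i) q - gradient (f i) p) := by
  choose H hH hHapply using fun i => exists_symmetricBetween_apply_sub (hf i) (hsc i) (hL i) p q
  refine ⟨∑ i, c i • H i, .sum_smul hH hc0 hc1, ?_⟩
  simp only [_root_.sum_apply, _root_.smul_apply, hHapply]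

end AveragedHessian

section Step

variable {E : Type*} [NormedAddCommGroup E] [InnerProductSpace ℝ E] {μ L : ℝ}

lemma norm_toLp_smul_smul (a b : ℝ) (e : E) :
    ‖WithLp.toLp 2 (a • e, b • e)‖ = √(a ^ 2 + b ^ 2) * ‖e‖ := by
  rw [WithLp.prod_norm_eq_of_L2, ← Real.sqrt_sq (norm_nonneg e), ← Real.sqrt_mul (by positivity)]
  simp only [WithLp.toLp_fst, WithLp.toLp_snd, norm_smul, mul_pow, Real.norm_eq_abs, sq_abs]
  ring_nf

lemma SymmetricBetween.asg_step_norm_le [FiniteDimensional ℝ E] {H : E →L[ℝ] E}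
    (hH : SymmetricBetween μ L H) (hμL : μ ≤ L) {α β : ℝ} (hα : 0 ≤ α)
    {xstar xprev xcur ycur xnext ynext g e : E}
    (hy : ycur = xcur + β • (xcur - xprev)) (hx : xnext = ycur - α • g)
    (hy' : ynext = xnext + β • (xnext - xcur)) (hg : g = H (ycur - xstar) + e) :
    ‖WithLp.toLp 2 (ynext - xstar, xcur - xnext)‖ ≤
      Rmax μ L α β * ‖WithLp.toLp 2 (ycur - xstar, xprev - xcur)‖ +
        α * √((1 + β) ^ 2 + 1) * ‖e‖ := by
  set u := ycur - xstar
  set w := xprev - xcur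
  have hstate : WithLp.toLp 2 (ynext - xstar, xcur - xnext) =
      WithLp.toLp 2 (u - (α * (1 + β)) • H u - β ^ 2 • w, α • H u + β • w) +
        WithLp.toLp 2 ((-(α * (1 + β))) • e, α • e) := by
    rw [← WithLp.toLp_add, Prod.mk_add_mk]
    congr 2 <;> simp only [u, w, hy', hx, hg, hy] <;> module
  have hblock : ‖WithLp.toLp 2 (u - (α * (1 + β)) • H u - β ^ 2 • w, α • H u + β • w)‖ ≤
      Rmax μ L α β * ‖WithLp.toLp 2 (u, w)‖ := by
    refine le_of_pow_le_pow_left₀ two_ne_zero (mul_nonneg (Rmax_nonneg hμL α β) (norm_nonneg _)) ?_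
    rw [mul_pow, WithLp.prod_norm_sq_eq_of_L2, WithLp.prod_norm_sq_eq_of_L2]
    exact hH.asg_sq_norm_le α β u w
  have hnoise : ‖WithLp.toLp 2 ((-(α * (1 + β))) • e, α • e)‖ = α * √((1 + β) ^ 2 + 1) * ‖e‖ := by
    rw [norm_toLp_smul_smul, show (-(α * (1 + β))) ^ 2 + α ^ 2 = α ^ 2 * ((1 + β) ^ 2 + 1) by ring,
      Real.sqrt_mul (sq_nonneg α), Real.sqrt_sq hα]
  rw [hstate, ← hnoise]
  exact (norm_add_le _ _).trans (by gcongr)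

end Step

lemma le_pow_mul_add_div_of_le_mul_add {a : ℕ → ℝ} {r b : ℝ} (hr0 : 0 ≤ r) (hr1 : r < 1)
    (hb : 0 ≤ b) (h : ∀ k, a (k + 1) ≤ r * a k + b) (k : ℕ) :
    a k ≤ r ^ k * a 0 + b / (1 - r) := by
  have hfix : r * (b / (1 - r)) + b = b / (1 - r) := by
    field_simp [(sub_pos.mpr hr1).ne']; ring
  induction k with
  | zero => simpa using div_nonneg hb (sub_pos.mpr hr1).le
  | succ k ih =>
    calc a (k + 1) ≤ r * (r ^ k * a 0 + b / (1 - r)) + b := (h k).trans (by gcongr)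
      _ = r ^ (k + 1) * a 0 + b / (1 - r) := by linear_combination hfix

section Stochastic

variable {Ω : Type*} [MeasurableSpace Ω] {P : Measure Ω}

lemma integrable_of_le_mul_add {Z N : ℕ → Ω → ℝ} {r : ℝ}
    (hZm : ∀ k, AEStronglyMeasurable (Z k) P) (hZnn : ∀ k ω, 0 ≤ Z k ω)
    (hZ0 : Integrable (Z 0) P) (hN : ∀ k, Integrable (N k) P)
    (hstep : ∀ k ω, Z (k + 1) ω ≤ r * Z k ω + N (k + 1) ω) (k : ℕ) : Integrable (Z k) P := by
  induction k with
  | zero => exact hZ0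
  | succ k ih =>
    refine ((ih.const_mul r).add (hN (k + 1))).mono' (hZm (k + 1)) (.of_forall fun ω => ?_)
    rw [Real.norm_of_nonneg (hZnn _ ω)]
    exact hstep k ω

lemma integral_le_pow_mul_add_div {Z N : ℕ → Ω → ℝ} {r b : ℝ} (hr0 : 0 ≤ r) (hr1 : r < 1)
    (hb : 0 ≤ b) (hZm : ∀ k, AEStronglyMeasurable (Z k) P) (hZnn : ∀ k ω, 0 ≤ Z k ω)
    (hZ0 : Integrable (Z 0) P) (hN : ∀ k, Integrable (N k) P) (hNb : ∀ k, ∫ ω, N k ω ∂P ≤ b)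
    (hstep : ∀ k ω, Z (k + 1) ω ≤ r * Z k ω + N (k + 1) ω) (k : ℕ) :
    ∫ ω, Z k ω ∂P ≤ r ^ k * ∫ ω, Z 0 ω ∂P + b / (1 - r) := by
  have hZ := integrable_of_le_mul_add hZm hZnn hZ0 hN hstep
  refine le_pow_mul_add_div_of_le_mul_add (a := fun k => ∫ ω, Z k ω ∂P) hr0 hr1 hb (fun k => ?_) k
  calc ∫ ω, Z (k + 1) ω ∂P ≤ ∫ ω, r * Z k ω + N (k + 1) ω ∂P :=
        integral_mono (hZ (k + 1)) (((hZ k).const_mul r).add (hN (k + 1))) (hstep k)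
    _ ≤ r * ∫ ω, Z k ω ∂P + b := by
        rw [integral_add ((hZ k).const_mul r) (hN (k + 1)), integral_const_mul]
        linarith [hNb (k + 1)]

lemma integrable_apply_of_sum_eq_one [IsFiniteMeasure P] {ι : Type*} [Fintype ι]
    {ν : Ω → ι → ℝ} (hν : Measurable ν) (hν0 : ∀ ω i, 0 ≤ ν ω i) (hν1 : ∀ ω, ∑ i, ν ω i = 1)
    (i : ι) : Integrable (fun ω => ν ω i) P :=
  .of_bound ((measurable_pi_apply i).comp hν).aestronglyMeasurable 1 (.of_forall fun ω => by
    rw [Real.norm_of_nonneg (hν0 ω i), ← hν1 ω]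
    exact Finset.single_le_sum (fun j _ => hν0 ω j) (Finset.mem_univ i))

lemma integral_norm_sum_smul_le {ι E : Type*} [Fintype ι] [NormedAddCommGroup E]
    [NormedSpace ℝ E] {ν : Ω → ι → ℝ} (hν : ∀ i, Integrable (fun ω => ν ω i) P)
    (hν0 : ∀ ω i, 0 ≤ ν ω i) (v : ι → E) :
    ∫ ω, ‖∑ i, ν ω i • v i‖ ∂P ≤ ∑ i, (∫ ω, ν ω i ∂P) * ‖v i‖ := by
  calc ∫ ω, ‖∑ i, ν ω i • v i‖ ∂P ≤ ∫ ω, ∑ i, ν ω i * ‖v i‖ ∂P := by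
        refine integral_mono (integrable_finsetSum _ fun i _ => (hν i).smul_const (v i)).norm
          (integrable_finsetSum _ fun i _ => (hν i).mul_const _) fun ω => ?_
        refine (norm_sum_le _ _).trans_eq (Finset.sum_congr rfl fun i _ => ?_)
        rw [norm_smul, Real.norm_of_nonneg (hν0 ω i)]
    _ = _ := by
        rw [integral_finsetSum _ fun i _ => (hν i).mul_const _]
        simp only [integral_mul_const]

lemma measurable_asg_iterates {E ι : Type*} [NormedAddCommGroup E] [NormedSpace ℝ E]
    [MeasurableSpace E] [BorelSpace E] [SecondCountableTopology E] [Fintype ι]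
    {G : ι → E → E} (hG : ∀ i, Continuous (G i)) {ν : ℕ → Ω → ι → ℝ}
    (hν : ∀ k, Measurable (ν k)) {α β : ℝ} {x0 : E} {x y : ℕ → Ω → E}
    (hx0 : ∀ ω, x 0 ω = x0) (hy1 : ∀ ω, y 1 ω = x 0 ω)
    (hy : ∀ k ω, y (k + 2) ω = x (k + 1) ω + β • (x (k + 1) ω - x k ω))
    (hx : ∀ k ω, x (k + 1) ω = y (k + 1) ω - α • ∑ i, ν (k + 1) ω i • G i (y (k + 1) ω))
    (k : ℕ) : Measurable (x k) ∧ Measurable (y (k + 1)) := by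
  induction k with
  | zero =>
    have hx0' : Measurable (x 0) := by rw [funext hx0]; exact measurable_const
    exact ⟨hx0', by rw [funext hy1]; exact hx0'⟩
  | succ k ih =>
    have hxk : Measurable (x (k + 1)) := by
      rw [funext (hx k)]
      refine ih.2.sub (Measurable.const_smul ?_ α)
      exact Finset.measurable_sum _ fun i _ =>
        ((measurable_pi_apply i).comp (hν (k + 1))).smul ((hG i).measurable.comp ih.2)
    exact ⟨hxk, by rw [funext (hy k)]; exact hxk.add ((hxk.sub ih.1).const_smul β)⟩

end Stochastic

lemma sampled_asg_step_norm_le {E ι : Type*} [NormedAddCommGroup E] [InnerProductSpace ℝ E]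
    [FiniteDimensional ℝ E] [Fintype ι] {μ L α β : ℝ} {f : ι → E → ℝ}
    (hf : ∀ i, ContDiff ℝ 2 (f i)) (hsc : ∀ i, StrongConvexOn Set.univ μ (f i))
    (hL : ∀ i u v, ‖gradient (f i) u - gradient (f i) v‖ ≤ L * ‖u - v‖) (hμL : μ ≤ L)
    (hα : 0 ≤ α) {c : ι → ℝ} (hc0 : ∀ i, 0 ≤ c i) (hc1 : ∑ i, c i = 1)
    {xstar xprev xcur ycur xnext ynext : E}
    (hy : ycur = xcur + β • (xcur - xprev))
    (hx : xnext = ycur - α • ∑ i, c i • gradient (f i) ycur)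
    (hy' : ynext = xnext + β • (xnext - xcur)) :
    ‖WithLp.toLp 2 (ynext - xstar, xcur - xnext)‖ ≤
      Rmax μ L α β * ‖WithLp.toLp 2 (ycur - xstar, xprev - xcur)‖ +
        α * √((1 + β) ^ 2 + 1) * ‖∑ i, c i • gradient (f i) xstar‖ := by
  obtain ⟨H, hH, hHg⟩ := exists_symmetricBetween_sum_smul_apply_sub hf hsc hL hc0 hc1 xstar ycur
  refine hH.asg_step_norm_le hμL hα hy hx hy' ?_
  rw [hHg, ← Finset.sum_add_distrib]
  simp [smul_sub]

theorem stmt5 {d : ℕ} (n : ℕ)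
    (μ L : ℝ) (hμL : μ ≤ L)
    (f : Fin n → EuclideanSpace ℝ (Fin d) → ℝ)
    (hC2 : ∀ i, ContDiff ℝ 2 (f i))
    (hsc : ∀ i, StrongConvexOn Set.univ μ (f i))
    (hsmooth : ∀ i u v, ‖gradient (f i) u - gradient (f i) v‖ ≤ L * ‖u - v‖)
    (xstar : EuclideanSpace ℝ (Fin d))
    {Ω : Type*} [MeasurableSpace Ω] (P : Measure Ω) [IsProbabilityMeasure P]
    (ν : ℕ → Ω → Fin n → ℝ)
    (hνmeas : ∀ k, Measurable (ν k))
    (hνnonneg : ∀ k ω i, 0 ≤ ν k ω i)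
    (hνsum : ∀ k ω, ∑ i, ν k ω i = 1)
    (hνmean : ∀ k i, ∫ ω, ν k ω i ∂P = 1 / (n : ℝ))
    (α β : ℝ) (hα : 0 < α)
    (hR : Rmax μ L α β < 1)
    (x0 : EuclideanSpace ℝ (Fin d))
    (x y : ℕ → Ω → EuclideanSpace ℝ (Fin d))
    (hx0 : ∀ ω, x 0 ω = x0)
    (hy1 : ∀ ω, y 1 ω = x 0 ω)
    (hy : ∀ k ω, y (k + 2) ω = x (k + 1) ω + β • (x (k + 1) ω - x k ω))
    (hx : ∀ k ω, x (k + 1) ω = y (k + 1) ω -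
      α • ∑ i, ν (k + 1) ω i • gradient (f i) (y (k + 1) ω)) :
    ∀ k : ℕ,
      ∫ ω, ‖y (k + 1) ω - xstar‖ ∂P ≤
        Rmax μ L α β ^ k * ‖x0 - xstar‖ +
          α * Real.sqrt ((1 + β) ^ 2 + 1) / (1 - Rmax μ L α β) *
            ((1 / (n : ℝ)) * ∑ i, ‖gradient (f i) xstar‖) := by
  set c := α * √((1 + β) ^ 2 + 1)
  -- the error state `(y_{k+1} - x⋆, x_{k-1} - x_k)`; truncated subtraction encodes `x_{-1} = x_0`
  set Z : ℕ → Ω → ℝ := fun k ω => ‖WithLp.toLp 2 (y (k + 1) ω - xstar, x (k - 1) ω - x k ω)‖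
  set N : ℕ → Ω → ℝ := fun k ω => c * ‖∑ i, ν k ω i • gradient (f i) xstar‖
  have hstep : ∀ k ω, Z (k + 1) ω ≤ Rmax μ L α β * Z k ω + N (k + 1) ω := fun k ω => by
    refine sampled_asg_step_norm_le hC2 hsc hsmooth hμL hα.le (hνnonneg (k + 1) ω) (hνsum (k + 1) ω)
      ?_ (hx k ω) (hy k ω)
    cases k with
    | zero => simp [hy1]
    | succ j => exact hy j ω
  have hmeas := measurable_asg_iterates (G := fun i => gradient (f i))
    (fun i => (hC2 i).contDiff_one_gradient.continuous) hνmeas hx0 hy1 hy hx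
  have hZm : ∀ k, AEStronglyMeasurable (Z k) P := fun k =>
    (WithLp.prod_continuous_toLp 2 _ _).norm.comp_aestronglyMeasurable
      (((hmeas k).2.sub measurable_const).prodMk
        ((hmeas (k - 1)).1.sub (hmeas k).1)).aestronglyMeasurable
  have hZ0 : Z 0 = fun _ => ‖x0 - xstar‖ := by
    ext ω; simp [Z, hy1, hx0, WithLp.prod_norm_eq_of_L2]
  have hZ0int : Integrable (Z 0) P := by rw [hZ0]; exact integrable_const _
  have hνint k := integrable_apply_of_sum_eq_one (P := P) (hνmeas k) (hνnonneg k) (hνsum k)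
  have hN : ∀ k, Integrable (N k) P := fun k =>
    (integrable_finsetSum _ fun i _ => (hνint k i).smul_const _).norm.const_mul c
  have hNb : ∀ k, ∫ ω, N k ω ∂P ≤ c * ((1 / (n : ℝ)) * ∑ i, ‖gradient (f i) xstar‖) := fun k => by
    rw [integral_const_mul]
    gcongr
    simpa [hνmean, Finset.mul_sum] using
      integral_norm_sum_smul_le (hνint k) (hνnonneg k) fun i => gradient (f i) xstar
  intro k
  calc ∫ ω, ‖y (k + 1) ω - xstar‖ ∂P ≤ ∫ ω, Z k ω ∂P :=
        integral_mono_of_nonneg (.of_forall fun ω => norm_nonneg _)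
          (integrable_of_le_mul_add hZm (fun _ _ => norm_nonneg _) hZ0int hN hstep k)
          (.of_forall fun ω => WithLp.norm_fst_le _
            (WithLp.toLp 2 (y (k + 1) ω - xstar, x (k - 1) ω - x k ω)))
    _ ≤ _ := integral_le_pow_mul_add_div (Rmax_nonneg hμL α β) hR (by positivity) hZm
          (fun _ _ => norm_nonneg _) hZ0int hN hNb hstep k
    _ = _ := by rw [hZ0]; simp; ring
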